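/- If p1 spatially dominates p2 with respect to the vertex set of conv(Q), and Q is contained in conv(V) where V is that vertex set, then p1 spatially dominates p2 with respect to Q — in particular, a point that is a spatial skyline with respect to Q is a spatial skyline with respect to V whenever weak dominance transfers: d(p1,q) ≤ d(p2,q) for all q ∈ V implies d(p1,q) ≤ d(p2,q) for all q ∈ Q. -/

import Mathlib

def SpatiallyDominatesSet {d : ℕ} (R : Set (EuclideanSpace ℝ (Fin d)))
    (a b : EuclideanSpace ℝ (Fin d)) : Prop :=
  (∀ q ∈ R, dist a q ≤ dist b q) ∧ ∃ q ∈ R, dist a q < dist b q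

/-!
The points at least as close to `p1` as to `p2` form a closed half-space bounded by the
perpendicular bisector of `p1 p2`. Being convex, it contains the convex hull of `V` as soon as it
contains `V`, so weak dominance passes from `V` to `Q ⊆ conv V`; a strict witness in `V` is also
one in `Q ⊇ V`.
-/

section

variable {E : Type*} [NormedAddCommGroup E] [InnerProductSpace ℝ E]

theorem setOf_dist_le_dist_eq_halfSpace (a b : E) :
    {x | dist a x ≤ dist b x} = {x | inner ℝ (b - a) x ≤ (‖b‖ ^ 2 - ‖a‖ ^ 2) / 2} := by
  ext x
  simp only [Set.mem_ofPred_eq]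
  rw [← sq_le_sq₀ dist_nonneg dist_nonneg, dist_eq_norm, dist_eq_norm, norm_sub_sq_real,
    norm_sub_sq_real, inner_sub_left]
  constructor <;> intro <;> linarith

theorem convex_setOf_dist_le_dist (a b : E) : Convex ℝ {x | dist a x ≤ dist b x} := by
  rw [setOf_dist_le_dist_eq_halfSpace]
  exact convex_halfSpace_le (innerₛₗ ℝ (b - a)).isLinear _

theorem dist_le_dist_of_mem_convexHull {a b x : E} {V : Set E}
    (hV : ∀ v ∈ V, dist a v ≤ dist b v) (hx : x ∈ convexHull ℝ V) : dist a x ≤ dist b x :=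
  convexHull_min hV (convex_setOf_dist_le_dist a b) hx

end

theorem stmt17_general (d : ℕ) (Q V : Set (EuclideanSpace ℝ (Fin d)))
    (hVQ : V ⊆ Q) (hQV : Q ⊆ convexHull ℝ V)
    (p1 p2 : EuclideanSpace ℝ (Fin d))
    (h : SpatiallyDominatesSet V p1 p2) :
    SpatiallyDominatesSet Q p1 p2 := by
  obtain ⟨hle, q, hqV, hlt⟩ := h
  exact ⟨fun x hx => dist_le_dist_of_mem_convexHull hle (hQV hx), q, hVQ hqV, hlt⟩

theorem stmt17 (d : ℕ) (Q V : Set (EuclideanSpace ℝ (Fin d)))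
    (hQfin : Q.Finite) (hVQ : V ⊆ Q) (hQV : Q ⊆ convexHull ℝ V)
    (p1 p2 : EuclideanSpace ℝ (Fin d))
    (h : SpatiallyDominatesSet V p1 p2) :
    SpatiallyDominatesSet Q p1 p2 :=
  stmt17_general d Q V hVQ hQV p1 p2 h
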